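/- Let 0 ≤ δ < 1 and B, C > 0, and for each n (sufficiently large) let Z^{(n)} = (z^{(n)}_{ij}) be a typical table for the margins of M_{n,δ}(B,C). Then z^{(n)}_{⌊n^δ⌋+1, ⌊n^δ⌋+1} ≤ C and z^{(n)}_{1, ⌊n^δ⌋+1} ≤ BC for all such n, and moreover z^{(n)}_{⌊n^δ⌋+1, ⌊n^δ⌋+1} = C + O(n^{δ−1}) and z^{(n)}_{1, ⌊n^δ⌋+1} = BC + O(n^{δ−1}) as n → ∞. -/
import Mathlib


open Finset Filter

/-- The binary transportation polytope: `m × n` real matrices with entries in `[0,1]`,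
row sums `r` and column sums `c`. -/
def P01 {m n : ℕ} (r : Fin m → ℕ) (c : Fin n → ℕ) : Set (Fin m → Fin n → ℝ) :=
  {Z | (∀ i j, 0 ≤ Z i j ∧ Z i j ≤ 1) ∧ (∀ i, ∑ j, Z i j = (r i : ℝ)) ∧
    (∀ j, ∑ i, Z i j = (c j : ℝ))}

/-- The Bernoulli entropy functional
`g(Z) = ∑_{i,j} z_{ij} ln(1/z_{ij}) + (1 - z_{ij}) ln(1/(1 - z_{ij}))`. -/
noncomputable def entG {m n : ℕ} (Z : Fin m → Fin n → ℝ) : ℝ :=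
  ∑ i, ∑ j, (Z i j * Real.log (1 / Z i j) + (1 - Z i j) * Real.log (1 / (1 - Z i j)))

/-- `Z` is a typical table for the margins `(r, c)`: it has all entries in `(0,1)`,
lies in the binary transportation polytope, and maximizes `g` among all matrices in the
polytope with entries in `(0,1)`. -/
def IsTypicalTable {m n : ℕ} (r : Fin m → ℕ) (c : Fin n → ℕ)
    (Z : Fin m → Fin n → ℝ) : Prop :=
  (∀ i j, 0 < Z i j ∧ Z i j < 1) ∧ Z ∈ P01 r c ∧
    ∀ W ∈ P01 r c, (∀ i j, 0 < W i j ∧ W i j < 1) → entG W ≤ entG Z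

/-- The margins of `BCT n δ B C`: the first `⌊n^δ⌋` entries equal `⌊BCn⌋` and the
remaining `n` entries equal `⌊Cn⌋`. -/
noncomputable def marg (n : ℕ) (δ B C : ℝ) : Fin (⌊(n : ℝ) ^ δ⌋₊ + n) → ℕ :=
  fun i => if i.1 < ⌊(n : ℝ) ^ δ⌋₊ then ⌊B * C * (n : ℝ)⌋₊ else ⌊C * (n : ℝ)⌋₊

/-- Entry of a square real matrix at 0-based natural indices, with junk value `0`
out of range. -/
def entR {N : ℕ} (Z : Fin N → Fin N → ℝ) (a b : ℕ) : ℝ :=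
  if h : a < N ∧ b < N then Z ⟨a, h.1⟩ ⟨b, h.2⟩ else 0

lemma entG_eq {m n : ℕ} (Z : Fin m → Fin n → ℝ) :
    entG Z = ∑ p : Fin m × Fin n, Real.binEntropy (Z p.1 p.2) := by
  rw [entG, ← Fintype.sum_prod_type']
  simp [Real.binEntropy, one_div]

lemma binEntropy_mid_le {x y : ℝ} (hx : x ∈ Set.Icc (0:ℝ) 1) (hy : y ∈ Set.Icc (0:ℝ) 1) :
    (Real.binEntropy x + Real.binEntropy y) / 2 ≤ Real.binEntropy ((x + y) / 2) := by
  have h := Real.strictConcave_binEntropy.concaveOn.2 hx hy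
    (by norm_num : (0:ℝ) ≤ 1/2) (by norm_num : (0:ℝ) ≤ 1/2) (by norm_num)
  simp only [smul_eq_mul] at h
  have e1 : (1/2:ℝ) * x + (1/2) * y = (x+y)/2 := by ring
  rw [e1] at h
  linarith

lemma binEntropy_mid_lt {x y : ℝ} (hx : x ∈ Set.Icc (0:ℝ) 1) (hy : y ∈ Set.Icc (0:ℝ) 1)
    (hne : x ≠ y) :
    (Real.binEntropy x + Real.binEntropy y) / 2 < Real.binEntropy ((x + y) / 2) := by
  have h := Real.strictConcave_binEntropy.2 hx hy hne
    (by norm_num : (0:ℝ) < 1/2) (by norm_num : (0:ℝ) < 1/2) (by norm_num)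
  simp only [smul_eq_mul] at h
  have e1 : (1/2:ℝ) * x + (1/2) * y = (x+y)/2 := by ring
  rw [e1] at h
  linarith

lemma typical_eq {m n : ℕ} {r : Fin m → ℕ} {c : Fin n → ℕ} {Z W : Fin m → Fin n → ℝ}
    (hZ : IsTypicalTable r c Z) (hW0 : ∀ i j, 0 < W i j ∧ W i j < 1)
    (hWP : W ∈ P01 r c) (hE : entG Z ≤ entG W) : Z = W := by
  by_contra hne
  obtain ⟨i0, hi0⟩ := Function.ne_iff.mp hne
  obtain ⟨j0, hj0⟩ := Function.ne_iff.mp hi0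
  set M : Fin m → Fin n → ℝ := fun i j => (Z i j + W i j) / 2 with hM
  have hM0 : ∀ i j, 0 < M i j ∧ M i j < 1 := by
    intro i j
    obtain ⟨h1, h2⟩ := hZ.1 i j
    obtain ⟨h3, h4⟩ := hW0 i j
    constructor <;> (simp only [hM]; linarith)
  have hMP : M ∈ P01 r c := by
    obtain ⟨_, hr, hc⟩ := hZ.2.1
    obtain ⟨_, hr', hc'⟩ := hWP
    refine ⟨fun i j => ⟨(hM0 i j).1.le, (hM0 i j).2.le⟩, fun i => ?_, fun j => ?_⟩
    · simp only [hM, ← Finset.sum_div, Finset.sum_add_distrib, hr i, hr' i]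
      ring
    · simp only [hM, ← Finset.sum_div, Finset.sum_add_distrib, hc j, hc' j]
      ring
  have hmem : ∀ (x : ℝ), 0 < x → x < 1 → x ∈ Set.Icc (0:ℝ) 1 :=
    fun x h1 h2 => ⟨h1.le, h2.le⟩
  have key : (entG Z + entG W) / 2 < entG M := by
    rw [entG_eq Z, entG_eq W, entG_eq M, ← Finset.sum_add_distrib, Finset.sum_div]
    apply Finset.sum_lt_sum
    · intro p _
      exact binEntropy_mid_le (hmem _ (hZ.1 p.1 p.2).1 (hZ.1 p.1 p.2).2)
        (hmem _ (hW0 p.1 p.2).1 (hW0 p.1 p.2).2)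
    · exact ⟨(i0, j0), Finset.mem_univ _,
        binEntropy_mid_lt (hmem _ (hZ.1 i0 j0).1 (hZ.1 i0 j0).2)
          (hmem _ (hW0 i0 j0).1 (hW0 i0 j0).2) hj0⟩
  have hle : entG M ≤ entG Z := hZ.2.2 M hMP hM0
  linarith

lemma typical_row_eq {m n : ℕ} {r : Fin m → ℕ} {c : Fin n → ℕ} {Z : Fin m → Fin n → ℝ}
    (hZ : IsTypicalTable r c Z) (i i' : Fin m) (h : r i = r i') : Z i = Z i' := by
  set e := Equiv.swap i i' with he
  set W : Fin m → Fin n → ℝ := fun a => Z (e a) with hW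
  have hre : ∀ a, ((r (e a) : ℝ)) = r a := by
    intro a
    rcases eq_or_ne a i with rfl | ha
    · simp [he, h]
    rcases eq_or_ne a i' with rfl | ha'
    · simp [he, h]
    · rw [he, Equiv.swap_apply_of_ne_of_ne ha ha']
  have hW0 : ∀ a b, 0 < W a b ∧ W a b < 1 := fun a b => hZ.1 _ _
  have hWP : W ∈ P01 r c := by
    obtain ⟨h0, hr, hc⟩ := hZ.2.1
    exact ⟨fun a b => h0 _ _, fun a => (hr (e a)).trans (hre a),
      fun b => Equiv.sum_comp e (fun a => Z a b) ▸ hc b⟩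
  have hE : entG Z = entG W := by
    unfold entG
    exact (Equiv.sum_comp e (fun a => ∑ b, (Z a b * Real.log (1 / Z a b) +
      (1 - Z a b) * Real.log (1 / (1 - Z a b))))).symm
  have := typical_eq hZ hW0 hWP hE.le
  funext j
  have h1 := congrFun (congrFun this i) j
  simpa [hW, he] using h1

lemma typical_col_eq {m n : ℕ} {r : Fin m → ℕ} {c : Fin n → ℕ} {Z : Fin m → Fin n → ℝ}
    (hZ : IsTypicalTable r c Z) (j j' : Fin n) (h : c j = c j') :
    ∀ i, Z i j = Z i j' := by
  set e := Equiv.swap j j' with he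
  set W : Fin m → Fin n → ℝ := fun a b => Z a (e b) with hW
  have hce : ∀ b, ((c (e b) : ℝ)) = c b := by
    intro b
    rcases eq_or_ne b j with rfl | hb
    · simp [he, h]
    rcases eq_or_ne b j' with rfl | hb'
    · simp [he, h]
    · rw [he, Equiv.swap_apply_of_ne_of_ne hb hb']
  have hW0 : ∀ a b, 0 < W a b ∧ W a b < 1 := fun a b => hZ.1 _ _
  have hWP : W ∈ P01 r c := by
    obtain ⟨h0, hr, hc⟩ := hZ.2.1
    exact ⟨fun a b => h0 _ _,
      fun a => (Equiv.sum_comp e (fun b => Z a b)).trans (hr a),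
      fun b => (hc (e b)).trans (hce b)⟩
  have hE : entG Z = entG W := by
    unfold entG
    refine Finset.sum_congr rfl (fun a _ => ?_)
    exact (Equiv.sum_comp e (fun b => (Z a b * Real.log (1 / Z a b) +
      (1 - Z a b) * Real.log (1 / (1 - Z a b))))).symm
  have := typical_eq hZ hW0 hWP hE.le
  intro i
  have h1 := congrFun (congrFun this i) j
  simpa [hW, he] using h1

lemma key' (d n : ℕ) (h1d : 1 ≤ d) (hn : 1 ≤ n) (rBC rC : ℕ)
    {Z : Fin (d+n) → Fin (d+n) → ℝ}
    (hZ : IsTypicalTable (fun i : Fin (d+n) => if i.1 < d then rBC else rC)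
      (fun i : Fin (d+n) => if i.1 < d then rBC else rC) Z) :
    (d:ℝ) * Z ⟨0, by omega⟩ ⟨d, by omega⟩ + n * Z ⟨d, by omega⟩ ⟨d, by omega⟩ = rC ∧
    (d:ℝ) * Z ⟨0, by omega⟩ ⟨0, by omega⟩ + n * Z ⟨0, by omega⟩ ⟨d, by omega⟩ = rBC := by
  have hdN : d < d + n := by omega
  have h0N : 0 < d + n := by omega
  have hrow_lt : ∀ i : Fin (d+n), i.1 < d → Z i = Z ⟨0, h0N⟩ := fun i hi =>
    typical_row_eq hZ i ⟨0, h0N⟩ (by simp only; rw [if_pos hi, if_pos (show 0 < d by omega)])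
  have hrow_ge : ∀ i : Fin (d+n), d ≤ i.1 → Z i = Z ⟨d, hdN⟩ := fun i hi =>
    typical_row_eq hZ i ⟨d, hdN⟩ (by simp only; rw [if_neg (by omega), if_neg (by omega)])
  have hcol_lt : ∀ (a j : Fin (d+n)), j.1 < d → Z a j = Z a ⟨0, h0N⟩ := fun a j hj =>
    typical_col_eq hZ j ⟨0, h0N⟩ (by simp only; rw [if_pos hj, if_pos (show 0 < d by omega)]) a
  have hcol_ge : ∀ (a j : Fin (d+n)), d ≤ j.1 → Z a j = Z a ⟨d, hdN⟩ := fun a j hj =>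
    typical_col_eq hZ j ⟨d, hdN⟩ (by simp only; rw [if_neg (by omega), if_neg (by omega)]) a
  constructor
  · have h := hZ.2.1.2.2 ⟨d, hdN⟩
    rw [Fin.sum_univ_add] at h
    rw [Finset.sum_congr rfl
        (fun (i : Fin d) _ => congrFun (hrow_lt (Fin.castAdd n i) i.2) ⟨d, hdN⟩),
      Finset.sum_congr rfl
        (fun (i : Fin n) _ => congrFun (hrow_ge (Fin.natAdd d i) (Nat.le_add_right d i.1)) ⟨d, hdN⟩),
      Finset.sum_const, Finset.sum_const] at h
    have hv : ((fun i : Fin (d+n) => if i.1 < d then rBC else rC) ⟨d, hdN⟩) = rC :=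
      if_neg (lt_irrefl d)
    rw [hv] at h
    simpa [nsmul_eq_mul] using h
  · have h := hZ.2.1.2.1 ⟨0, h0N⟩
    rw [Fin.sum_univ_add] at h
    rw [Finset.sum_congr rfl
        (fun (j : Fin d) _ => hcol_lt ⟨0, h0N⟩ (Fin.castAdd n j) j.2),
      Finset.sum_congr rfl
        (fun (j : Fin n) _ => hcol_ge ⟨0, h0N⟩ (Fin.natAdd d j) (Nat.le_add_right d j.1)),
      Finset.sum_const, Finset.sum_const] at h
    have hv : ((fun i : Fin (d+n) => if i.1 < d then rBC else rC) ⟨0, h0N⟩) = rBC :=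
      if_pos (show 0 < d by omega)
    rw [hv] at h
    simpa [nsmul_eq_mul] using h

lemma key (δ B C : ℝ) (hδ0 : 0 ≤ δ) (hB : 0 < B) (hC : 0 < C) (n : ℕ) (hn : 1 ≤ n)
    {Z : Fin (⌊(n:ℝ)^δ⌋₊ + n) → Fin (⌊(n:ℝ)^δ⌋₊ + n) → ℝ}
    (hZ : IsTypicalTable (marg n δ B C) (marg n δ B C) Z) :
    entR Z ⌊(n:ℝ)^δ⌋₊ ⌊(n:ℝ)^δ⌋₊ ≤ C ∧ entR Z 0 ⌊(n:ℝ)^δ⌋₊ ≤ B * C ∧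
    C - ((⌊(n:ℝ)^δ⌋₊:ℝ) + 1)/n ≤ entR Z ⌊(n:ℝ)^δ⌋₊ ⌊(n:ℝ)^δ⌋₊ ∧
    B*C - ((⌊(n:ℝ)^δ⌋₊:ℝ) + 1)/n ≤ entR Z 0 ⌊(n:ℝ)^δ⌋₊ := by
  have hnR : (1:ℝ) ≤ (n:ℝ) := by exact_mod_cast hn
  have npos : (0:ℝ) < n := by linarith
  have h1rpow : (1:ℝ) ≤ (n:ℝ)^δ := Real.one_le_rpow hnR hδ0
  have h1d : 1 ≤ ⌊(n:ℝ)^δ⌋₊ := Nat.le_floor (by exact_mod_cast h1rpow)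
  obtain ⟨colsum, rowsum⟩ := key' ⌊(n:ℝ)^δ⌋₊ n h1d hn ⌊B*C*(n:ℝ)⌋₊ ⌊C*(n:ℝ)⌋₊ hZ
  have hdN : ⌊(n:ℝ)^δ⌋₊ < ⌊(n:ℝ)^δ⌋₊ + n := by omega
  have h0N : 0 < ⌊(n:ℝ)^δ⌋₊ + n := by omega
  obtain ⟨hp0, hp1⟩ := hZ.1 ⟨0, h0N⟩ ⟨⌊(n:ℝ)^δ⌋₊, hdN⟩
  obtain ⟨hq0, hq1⟩ := hZ.1 ⟨⌊(n:ℝ)^δ⌋₊, hdN⟩ ⟨⌊(n:ℝ)^δ⌋₊, hdN⟩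
  obtain ⟨ha0, ha1⟩ := hZ.1 ⟨0, h0N⟩ ⟨0, h0N⟩
  have hdnn : (0:ℝ) ≤ (⌊(n:ℝ)^δ⌋₊:ℝ) := Nat.cast_nonneg _
  have fC_le : ((⌊C*(n:ℝ)⌋₊ : ℝ)) ≤ C * n := Nat.floor_le (by positivity)
  have fC_gt : C * n < (⌊C*(n:ℝ)⌋₊ : ℝ) + 1 := Nat.lt_floor_add_one _
  have fBC_le : ((⌊B*C*(n:ℝ)⌋₊ : ℝ)) ≤ B * C * n := Nat.floor_le (by positivity)
  have fBC_gt : B * C * n < (⌊B*C*(n:ℝ)⌋₊ : ℝ) + 1 := Nat.lt_floor_add_one _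
  have eq1 : entR Z ⌊(n:ℝ)^δ⌋₊ ⌊(n:ℝ)^δ⌋₊ = Z ⟨⌊(n:ℝ)^δ⌋₊, hdN⟩ ⟨⌊(n:ℝ)^δ⌋₊, hdN⟩ :=
    dif_pos ⟨hdN, hdN⟩
  have eq2 : entR Z 0 ⌊(n:ℝ)^δ⌋₊ = Z ⟨0, h0N⟩ ⟨⌊(n:ℝ)^δ⌋₊, hdN⟩ := dif_pos ⟨h0N, hdN⟩
  have hdiv : ((⌊(n:ℝ)^δ⌋₊:ℝ)+1)/n * n = (⌊(n:ℝ)^δ⌋₊:ℝ)+1 :=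
    div_mul_cancel₀ _ (ne_of_gt npos)
  rw [eq1, eq2]
  refine ⟨?_, ?_, ?_, ?_⟩
  · nlinarith [mul_nonneg hdnn hp0.le]
  · nlinarith [mul_nonneg hdnn ha0.le]
  · nlinarith [mul_le_of_le_one_right hdnn hp1.le]
  · nlinarith [mul_le_of_le_one_right hdnn ha1.le]

/-- Display (2.4): the bottom-right and side entries of the typical table satisfy
`z_{n+1,n+1} ≤ C`, `z_{1,n+1} ≤ BC`, and moreover `z_{n+1,n+1} = C + O(n^(δ-1))` and
`z_{1,n+1} = BC + O(n^(δ-1))`. -/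
theorem typical_table_margin_asymptotics
    (δ B C : ℝ) (hδ0 : 0 ≤ δ) (hδ1 : δ < 1) (hB : 0 < B) (hC : 0 < C)
    (Z : ∀ n : ℕ, Fin (⌊(n : ℝ) ^ δ⌋₊ + n) → Fin (⌊(n : ℝ) ^ δ⌋₊ + n) → ℝ)
    (n₀ : ℕ) (hZ : ∀ n : ℕ, n₀ ≤ n → IsTypicalTable (marg n δ B C) (marg n δ B C) (Z n)) :
    (∀ n : ℕ, n₀ ≤ n →
      entR (Z n) ⌊(n : ℝ) ^ δ⌋₊ ⌊(n : ℝ) ^ δ⌋₊ ≤ C ∧ entR (Z n) 0 ⌊(n : ℝ) ^ δ⌋₊ ≤ B * C) ∧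
    (∃ K > (0 : ℝ), ∃ n₁ : ℕ, ∀ n : ℕ, n₁ ≤ n →
      |entR (Z n) ⌊(n : ℝ) ^ δ⌋₊ ⌊(n : ℝ) ^ δ⌋₊ - C| ≤ K * (n : ℝ) ^ (δ - 1) ∧
      |entR (Z n) 0 ⌊(n : ℝ) ^ δ⌋₊ - B * C| ≤ K * (n : ℝ) ^ (δ - 1)) := by
  constructor
  · intro n hn
    rcases Nat.eq_zero_or_pos n with rfl | hn1
    · constructor
      · rw [entR, dif_neg (by omega)]; positivity
      · rw [entR, dif_neg (by omega)]; positivity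
    · exact ⟨(key δ B C hδ0 hB hC n hn1 (hZ n hn)).1,
        (key δ B C hδ0 hB hC n hn1 (hZ n hn)).2.1⟩
  · refine ⟨2, by norm_num, max n₀ 1, fun n hn => ?_⟩
    have hn0 : n₀ ≤ n := le_trans (le_max_left _ _) hn
    have hn1 : 1 ≤ n := le_trans (le_max_right _ _) hn
    obtain ⟨h1, h2, h3, h4⟩ := key δ B C hδ0 hB hC n hn1 (hZ n hn0)
    have hnR : (1:ℝ) ≤ (n:ℝ) := by exact_mod_cast hn1
    have npos : (0:ℝ) < n := by linarith
    have h1rpow : (1:ℝ) ≤ (n:ℝ)^δ := Real.one_le_rpow hnR hδ0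
    have hfl : ((⌊(n:ℝ)^δ⌋₊:ℝ)) ≤ (n:ℝ)^δ := Nat.floor_le (by positivity)
    have hrw : (n:ℝ)^(δ-1) = (n:ℝ)^δ / n := by
      rw [Real.rpow_sub npos, Real.rpow_one]
    have hb : ((⌊(n:ℝ)^δ⌋₊:ℝ) + 1)/n ≤ 2 * (n:ℝ)^(δ-1) := by
      rw [hrw, ← mul_div_assoc]
      gcongr
      linarith
    have hpow0 : (0:ℝ) ≤ 2 * (n:ℝ)^(δ-1) := by positivity
    constructor
    · exact abs_le.mpr ⟨by linarith, by linarith⟩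
    · exact abs_le.mpr ⟨by linarith, by linarith⟩
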